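/- arXiv:0810.5044 — 4 statements merged into one kernel-verified Lean document; each statement's English description precedes it below -/
import Mathlib

section
/- Let B be a basket and p₂ an integer such that K³(B,1,p₂) > 0. Then for every integer m ≥ 2 one has P_{m+2}(B,1,p₂) − P_m(B,1,p₂) − p₂ > −1. In particular, if all the numbers P_k(B,1,p₂) are integers, then P_{m+2}(B,1,p₂) ≥ P_m(B,1,p₂) + p₂ for every m ≥ 2. -/
/-- A basket: a finite multiset of pairs `(b, r)` of positive integers with `2b ≤ r`. -/
def IsBasket (B : Multiset (ℕ × ℕ)) : Prop :=
  ∀ p ∈ B, 0 < p.1 ∧ 2 * p.1 ≤ p.2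

/-- Reid's Riemann–Roch volume `K³(B, χ, p₂)`. -/
def Kcube (B : Multiset (ℕ × ℕ)) (χ p₂ : ℤ) : ℚ :=
  2 * p₂ + 6 * χ - (B.map fun p => (p.1 : ℚ) * ((p.2 : ℚ) - (p.1 : ℚ)) / (p.2 : ℚ)).sum

/-- Reid's Riemann–Roch plurigenus `P_m(B, χ, p₂)` for `m ≥ 2`. -/
def Pm (B : Multiset (ℕ × ℕ)) (χ p₂ : ℤ) (m : ℕ) : ℚ :=
  (1 / 12 : ℚ) * (m : ℚ) * ((m : ℚ) - 1) * (2 * (m : ℚ) - 1) * Kcube B χ p₂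
    + (1 - 2 * (m : ℚ)) * (χ : ℚ)
    + (B.map fun p => ∑ j ∈ Finset.Icc 1 (m - 1),
        ((j * p.1 % p.2 : ℕ) : ℚ) * ((p.2 : ℚ) - ((j * p.1 % p.2 : ℕ) : ℚ))
          / (2 * (p.2 : ℚ))).sum

/-- The Miyaoka–Reid inequality for the pair `(B, χ)`:
`Σ_{(b,r)∈B} r − 24χ ≥ Σ_{(b,r)∈B} 1/r`. -/
def MiyaokaReid (B : Multiset (ℕ × ℕ)) (χ : ℤ) : Prop :=
  (B.map fun p => 1 / (p.2 : ℚ)).sum ≤ (B.map fun p => (p.2 : ℚ)).sum - 24 * χ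

/-- One-step packing: replace two elements `(b₁,r₁), (b₂,r₂)` by `(b₁+b₂, r₁+r₂)`. -/
def Pack (B B' : Multiset (ℕ × ℕ)) : Prop :=
  ∃ p q S, B = p ::ₘ q ::ₘ S ∧ B' = (p.1 + q.1, p.2 + q.2) ::ₘ S

/-- Normalization implementing the identification of a pair `(kb, kr)` (with
`gcd b r = 1`) with `k` copies of `(b, r)`. -/
def normalizeBasket (B : Multiset (ℕ × ℕ)) : Multiset (ℕ × ℕ) :=
  B.bind fun p => Multiset.replicate (Nat.gcd p.1 p.2)
    (p.1 / Nat.gcd p.1 p.2, p.2 / Nat.gcd p.1 p.2)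

/-- One step of packing, up to the identification. -/
def PackStep (B B' : Multiset (ℕ × ℕ)) : Prop :=
  ∃ C, Pack B C ∧ normalizeBasket C = B'

/-- `B` dominates `B'` (written `B ≽ B'`): `B'` is obtained from `B` by finitely many
one-step packings, up to the identification. -/
def Dominates (B B' : Multiset (ℕ × ℕ)) : Prop :=
  Relation.ReflTransGen PackStep (normalizeBasket B) (normalizeBasket B')

/-- The triple `(B, 1, p₂)` is admissible. -/
def Admissible (B : Multiset (ℕ × ℕ)) (p₂ : ℤ) : Prop :=
  IsBasket B ∧ 0 ≤ p₂ ∧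
  (∀ p ∈ B, Nat.gcd p.1 p.2 = 1) ∧
  0 < Kcube B 1 p₂ ∧
  (∀ m : ℕ, 2 ≤ m → ∃ n : ℕ, Pm B 1 p₂ m = (n : ℚ)) ∧
  (∀ m : ℕ, 2 ≤ m → Pm B 1 p₂ m + (p₂ : ℚ) ≤ Pm B 1 p₂ (m + 2)) ∧
  (∀ m n : ℕ, 2 ≤ m → 2 ≤ n → 1 ≤ Pm B 1 p₂ n → Pm B 1 p₂ m ≤ Pm B 1 p₂ (m + n))

/-! Write `φ(x) = x̄ (r − x̄)` for `x ∈ ℤ/r`, with `x̄ ∈ {0, …, r − 1}` its representative.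
Reid's formula gives
`P_{m+2} − P_m − p₂ = m(m+1) K³ − χ + Σ_{(b,r) ∈ B} (φ(mb) + φ((m+1)b) − φ(b)) / 2r`.
Since `φ` is even and subadditive on `ℤ/r`, `φ(b) = φ((m+1)b − mb) ≤ φ((m+1)b) + φ(mb)`,
so for `K³ > 0` and `m ≥ 1` the difference exceeds `−χ`. -/

def modWeight (r : ℕ) (x : ZMod r) : ℚ :=
  x.val * (r - x.val)

theorem modWeight_neg {r : ℕ} [NeZero r] (x : ZMod r) : modWeight r (-x) = modWeight r x := by
  unfold modWeight
  rw [ZMod.neg_val]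
  split_ifs with hx
  · simp [hx]
  · push_cast [(ZMod.val_lt x).le]
    ring

theorem modWeight_add_le {r : ℕ} [NeZero r] (x y : ZMod r) :
    modWeight r (x + y) ≤ modWeight r x + modWeight r y := by
  unfold modWeight
  have hx : (x.val : ℚ) ≤ r := by exact_mod_cast (ZMod.val_lt x).le
  have hy : (y.val : ℚ) ≤ r := by exact_mod_cast (ZMod.val_lt y).le
  rcases lt_or_ge (x.val + y.val) r with h | h
  · rw [ZMod.val_add_of_lt h]
    push_cast
    nlinarith [(Nat.cast_nonneg x.val : (0 : ℚ) ≤ _), (Nat.cast_nonneg y.val : (0 : ℚ) ≤ _)]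
  · rw [ZMod.val_add_of_le h]
    push_cast [h]
    nlinarith [mul_nonneg (sub_nonneg.mpr hx) (sub_nonneg.mpr hy)]

theorem modWeight_sub_le {r : ℕ} [NeZero r] (x y : ZMod r) :
    modWeight r (x - y) ≤ modWeight r x + modWeight r y := by
  simpa only [sub_eq_add_neg, modWeight_neg] using modWeight_add_le x (-y)

def reidCorrection (p : ℕ × ℕ) (j : ℕ) : ℚ :=
  ((j * p.1 % p.2 : ℕ) : ℚ) * ((p.2 : ℚ) - ((j * p.1 % p.2 : ℕ) : ℚ)) / (2 * (p.2 : ℚ))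

theorem reidCorrection_eq (p : ℕ × ℕ) (j : ℕ) :
    reidCorrection p j = modWeight p.2 ((j * p.1 : ℕ) : ZMod p.2) / (2 * p.2) := by
  rw [reidCorrection, modWeight, ZMod.val_natCast]

theorem Pm_eq_sum_reidCorrection (B : Multiset (ℕ × ℕ)) (χ p₂ : ℤ) (m : ℕ) :
    Pm B χ p₂ m = (1 / 12 : ℚ) * m * (m - 1) * (2 * m - 1) * Kcube B χ p₂ + (1 - 2 * m) * χ
      + (B.map fun p => ∑ j ∈ Finset.Icc 1 (m - 1), reidCorrection p j).sum :=
  rfl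

theorem Pm_add_two_sub_Pm (B : Multiset (ℕ × ℕ)) (χ p₂ : ℤ) {m : ℕ} (hm : 1 ≤ m) :
    Pm B χ p₂ (m + 2) - Pm B χ p₂ m = (m ^ 2 + m + 1 / 2) * Kcube B χ p₂ - 4 * χ
      + (B.map fun p => reidCorrection p m + reidCorrection p (m + 1)).sum := by
  have hsplit (f : ℕ → ℚ) : ∑ j ∈ Finset.Icc 1 (m + 2 - 1), f j =
      ∑ j ∈ Finset.Icc 1 (m - 1), f j + (f m + f (m + 1)) := by
    rw [show m + 2 - 1 = m - 1 + 1 + 1 by omega, Finset.sum_Icc_succ_top (by omega),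
      Finset.sum_Icc_succ_top (by omega), show m - 1 + 1 = m by omega, add_assoc]
  simp only [Pm_eq_sum_reidCorrection, hsplit, Multiset.sum_map_add]
  push_cast
  ring

theorem Kcube_correction_le_reidCorrection (B : Multiset (ℕ × ℕ)) (hB : IsBasket B) (m : ℕ) :
    (B.map fun p => (p.1 : ℚ) * ((p.2 : ℚ) - (p.1 : ℚ)) / (p.2 : ℚ)).sum ≤
      2 * (B.map fun p => reidCorrection p m + reidCorrection p (m + 1)).sum := by
  rw [← Multiset.sum_map_mul_left]
  refine Multiset.sum_map_le_sum_map _ _ fun ⟨b, r⟩ hp => ?_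
  obtain ⟨hb, hbr⟩ := hB _ hp
  have : NeZero r := ⟨by omega⟩
  have hsub : ((m + 1) * b : ℕ) - (m * b : ℕ) = (b : ZMod r) := by push_cast; ring
  have hkey := modWeight_sub_le ((m + 1) * b : ℕ) ((m * b : ℕ) : ZMod r)
  rw [hsub, modWeight, ZMod.val_natCast, Nat.mod_eq_of_lt (by omega)] at hkey
  rw [reidCorrection_eq, reidCorrection_eq]
  have hr : (0 : ℚ) < r := by exact_mod_cast (show 0 < r by omega)
  field_simp
  linarith

theorem Pm_add_two_sub_Pm_sub_gt (B : Multiset (ℕ × ℕ)) (hB : IsBasket B) {χ p₂ : ℤ}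
    (hK : 0 < Kcube B χ p₂) {m : ℕ} (hm : 1 ≤ m) :
    Pm B χ p₂ (m + 2) - Pm B χ p₂ m - p₂ > -χ := by
  have hdiff := Pm_add_two_sub_Pm B χ p₂ hm
  have hcorr := Kcube_correction_le_reidCorrection B hB m
  have hpos : 0 < ((m : ℚ) ^ 2 + m) * Kcube B χ p₂ := by positivity
  have hK_eq : Kcube B χ p₂ = 2 * p₂ + 6 * χ
      - (B.map fun p => (p.1 : ℚ) * ((p.2 : ℚ) - (p.1 : ℚ)) / (p.2 : ℚ)).sum := rfl
  linarith

/-- If `K³(B,1,p₂) > 0` then `P_{m+2} − P_m − p₂ > −1` for all `m ≥ 2`; if moreover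
all the `P_k(B,1,p₂)` are integers, then `P_{m+2} ≥ P_m + p₂` for all `m ≥ 2`. -/
theorem Pm_add_two_ge (B : Multiset (ℕ × ℕ)) (p₂ : ℤ)
    (hB : IsBasket B) (hK : 0 < Kcube B 1 p₂) :
    (∀ m : ℕ, 2 ≤ m → Pm B 1 p₂ (m + 2) - Pm B 1 p₂ m - (p₂ : ℚ) > -1) ∧
    ((∀ k : ℕ, 2 ≤ k → ∃ n : ℤ, Pm B 1 p₂ k = (n : ℚ)) →
      ∀ m : ℕ, 2 ≤ m → Pm B 1 p₂ m + (p₂ : ℚ) ≤ Pm B 1 p₂ (m + 2)) := by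
  have hgap (m : ℕ) (hm : 2 ≤ m) : Pm B 1 p₂ (m + 2) - Pm B 1 p₂ m - (p₂ : ℚ) > -1 := by
    exact_mod_cast Pm_add_two_sub_Pm_sub_gt B hB hK (by omega : 1 ≤ m)
  refine ⟨hgap, fun hint m hm => ?_⟩
  obtain ⟨a, ha⟩ := hint (m + 2) (by omega)
  obtain ⟨b, hb⟩ := hint m hm
  have h := hgap m hm
  rw [ha, hb] at h ⊢
  have : -1 < a - b - p₂ := by exact_mod_cast h
  exact_mod_cast (by omega : b + p₂ ≤ a)
end

section
/- Let (B,1,0) be an admissible triple with (P₃,P₄,P₅,P₆)(B,1,0) = (0,0,1,0). Then B dominates one of the five baskets {(9,22),(1,3)}, {(7,17),(3,8)}, {(5,12),(5,13)}, {(3,7),(7,18)}, {(1,2),(9,23)}. Consequently K³(B,1,0) ≥ 1/156 and P₁₀(B,1,0) ≥ 2. -/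
/-!
Write `jb mod r = jb − kr`. Then
`(jb mod r)(r − jb mod r)/2r = jb(r − jb)/2r + Σ_{1 ≤ i ≤ j} (jb − ir)₊`,
and after summing over `j < m` every non-integral term cancels against the `K³` term of Reid's
formula. This leaves
`P_m(B,1,0) = m(m−1)(2m−1)/2 + 1 − 2m − C(m,3) Σ b + Σ_{1 ≤ i ≤ j < m} (jb − ir)₊`.
For `m = 3, …, 6` the hypotheses become linear equations in truncated differences. These force
`Σ b = 10`, `r ≤ 3b` for every pair, and `Σ (5b − 2r)₊ = Σ (2r − 5b)₊ = 1`. Since the pairs are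
coprime, `B = {(2a+1, 5a+2), (2d+1, 5d+3), m × (2,5)}` with `a + d + m = 4`. Packing the copies of
`(2,5)` into the first pair gives the five baskets, `K³(B) = (1/(5a+2) + 1/(5d+3))/25`, and
`P₁₀` is computed from the same formula.
-/

open Finset

theorem Multiset.sum_map_add_eq_of_forall {α : Type*} {B : Multiset α} {f g h k : α → ℕ}
    (H : ∀ p ∈ B, f p + g p = h p + k p) :
    (B.map f).sum + (B.map g).sum = (B.map h).sum + (B.map k).sum := by
  rw [← Multiset.sum_map_add, ← Multiset.sum_map_add, Multiset.map_congr rfl H]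

theorem Multiset.exists_eq_cons_of_sum_map_eq_one {α : Type*} {B : Multiset α} {f : α → ℕ}
    (h : (B.map f).sum = 1) : ∃ p B', B = p ::ₘ B' ∧ f p = 1 ∧ ∀ q ∈ B', f q = 0 := by
  classical
  obtain ⟨p, hp, hfp⟩ : ∃ p ∈ B, f p ≠ 0 := by
    by_contra! H
    rw [Multiset.sum_eq_zero fun x hx => ?_] at h
    · exact zero_ne_one h
    · obtain ⟨q, hq, rfl⟩ := Multiset.mem_map.mp hx
      exact H q hq
  rw [← Multiset.cons_erase hp, Multiset.map_cons, Multiset.sum_cons] at h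
  refine ⟨p, B.erase p, (Multiset.cons_erase hp).symm, by omega, fun q hq => ?_⟩
  exact Multiset.sum_eq_zero_iff.mp (by omega) _ (Multiset.mem_map_of_mem f hq)

theorem sum_range_natCast_sq (m : ℕ) :
    ∑ j ∈ range m, ((j : ℚ) ^ 2) = m * (m - 1) * (2 * m - 1) / 6 := by
  induction m with
  | zero => simp
  | succ m ih => rw [sum_range_succ, ih]; push_cast; ring

theorem sum_range_choose_two (m : ℕ) : ∑ j ∈ range m, j.choose 2 = m.choose 3 := by
  induction m with
  | zero => simp
  | succ m ih => rw [sum_range_succ, ih, Nat.choose_succ_succ' m 2, add_comm]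

theorem sum_Icc_one_pred_eq_sum_range {M : Type*} [AddCommMonoid M] {f : ℕ → M} (h : f 0 = 0)
    (m : ℕ) : ∑ j ∈ Icc 1 (m - 1), f j = ∑ j ∈ range m, f j := by
  cases m with
  | zero => simp
  | succ k =>
    rw [sum_range_succ', h, add_zero, Nat.add_sub_cancel, ← Ico_add_one_right_eq_Icc,
      sum_Ico_eq_sum_range, Nat.add_sub_cancel]
    simp only [add_comm 1]

theorem sum_range_tsub_succ_mul {n r N : ℕ} (hr : 0 < r) (hN : n / r ≤ N) :
    (∑ i ∈ range N, ((n - (i + 1) * r : ℕ) : ℚ)) =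
      ((n % r : ℕ) : ℚ) * (r - (n % r : ℕ)) / (2 * r) - n * (r - n) / (2 * r) := by
  set k := n / r
  have hzero : ∑ i ∈ Ico k N, ((n - (i + 1) * r : ℕ) : ℚ) = 0 := by
    refine sum_eq_zero fun i hi => ?_
    have : n < (i + 1) * r := calc
      n < k * r + r := Nat.lt_div_mul_add hr
      _ = (k + 1) * r := by ring
      _ ≤ (i + 1) * r := Nat.mul_le_mul_right r (by have := (mem_Ico.mp hi).1; omega)
    simp [Nat.sub_eq_zero_of_le this.le]
  have hcast : ∀ i ∈ range k, ((n - (i + 1) * r : ℕ) : ℚ) = n - (i + 1) * r := by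
    intro i hi
    have : (i + 1) * r ≤ n :=
      (Nat.mul_le_mul_right r (mem_range.mp hi)).trans (Nat.div_mul_le_self n r)
    push_cast [Nat.cast_sub this]; ring
  have gauss : ∀ l : ℕ, ∑ i ∈ range l, ((n : ℚ) - (i + 1) * r) = l * n - r * l * (l + 1) / 2 := by
    intro l
    induction l with
    | zero => simp
    | succ l ih => rw [sum_range_succ, ih]; push_cast; ring
  rw [← sum_range_add_sum_Ico _ hN, hzero, add_zero, sum_congr rfl hcast, gauss]
  have hn : (n : ℚ) = r * k + (n % r : ℕ) := by exact_mod_cast (Nat.div_add_mod n r).symm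
  have hr' : (r : ℚ) ≠ 0 := by positivity
  rw [hn]
  field_simp
  ring

def correction (m : ℕ) (p : ℕ × ℕ) : ℕ :=
  ∑ j ∈ range m, ∑ i ∈ range j, (j * p.1 - (i + 1) * p.2)

theorem sum_Icc_residue_term_eq {b r : ℕ} (hr : 0 < r) (hbr : b ≤ r) (m : ℕ) :
    ∑ j ∈ Icc 1 (m - 1), ((j * b % r : ℕ) : ℚ) * ((r : ℚ) - ((j * b % r : ℕ) : ℚ)) / (2 * r) =
      m * (m - 1) * (2 * m - 1) / 12 * (b * (r - b) / r) - m.choose 3 * b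
        + correction m (b, r) := by
  rw [sum_Icc_one_pred_eq_sum_range (by simp)]
  have hj : ∀ j ∈ range m, ((j * b % r : ℕ) : ℚ) * ((r : ℚ) - ((j * b % r : ℕ) : ℚ)) / (2 * r) =
      (j : ℚ) ^ 2 / 2 * (b * (r - b) / r) - (j.choose 2 : ℕ) * b
        + ((∑ i ∈ range j, (j * b - (i + 1) * r) : ℕ) : ℚ) := by
    intro j _
    have hN : j * b / r ≤ j := Nat.div_le_of_le_mul (by nlinarith)
    have hr' : (r : ℚ) ≠ 0 := by positivity
    rw [Nat.cast_sum, sum_range_tsub_succ_mul hr hN, Nat.cast_choose_two]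
    push_cast
    field_simp
    ring
  rw [sum_congr rfl hj, sum_add_distrib, sum_sub_distrib, ← sum_mul, ← sum_div,
    sum_range_natCast_sq, ← sum_mul, ← Nat.cast_sum, sum_range_choose_two, correction, Nat.cast_sum]
  ring

theorem Pm_eq_correction {B : Multiset (ℕ × ℕ)} (hB : ∀ p ∈ B, 0 < p.2 ∧ p.1 ≤ p.2)
    (χ p₂ : ℤ) (m : ℕ) :
    Pm B χ p₂ m = m * (m - 1) * (2 * m - 1) / 12 * (2 * p₂ + 6 * χ) + (1 - 2 * m) * χ
      + ((B.map (correction m)).sum : ℕ) - m.choose 3 * ((B.map Prod.fst).sum : ℕ) := by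
  rw [Pm, Kcube,
    Multiset.map_congr rfl fun p hp => sum_Icc_residue_term_eq (hB p hp).1 (hB p hp).2 m,
    Multiset.sum_map_add, Multiset.sum_map_sub, Multiset.sum_map_mul_left,
    Multiset.sum_map_mul_left, Nat.cast_multiset_sum, Nat.cast_multiset_sum, Multiset.map_map,
    Multiset.map_map]
  simp only [Function.comp_def]
  ring

theorem IsBasket.pos_le {B : Multiset (ℕ × ℕ)} (hB : IsBasket B) :
    ∀ p ∈ B, 0 < p.2 ∧ p.1 ≤ p.2 :=
  fun p hp => by have := hB p hp; omega

theorem normalizeBasket_of_coprime {B : Multiset (ℕ × ℕ)} (h : ∀ p ∈ B, Nat.gcd p.1 p.2 = 1) :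
    normalizeBasket B = B := by
  rw [normalizeBasket, Multiset.bind_congr fun p hp => by
      rw [h p hp, Nat.div_one, Nat.div_one, Multiset.replicate_one],
    Multiset.bind_singleton, Multiset.map_id']

section SmallCorrections

variable {b r : ℕ} (h : 2 * b ≤ r)
include h

theorem correction_three : correction 3 (b, r) = 0 := by
  simp [correction, sum_range_succ]; omega

theorem correction_four : correction 4 (b, r) = 3 * b - r := by
  simp [correction, sum_range_succ]; omega

theorem correction_five : correction 5 (b, r) = (3 * b - r) + (4 * b - r) := by
  simp [correction, sum_range_succ]; omega

theorem correction_six :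
    correction 6 (b, r) = (3 * b - r) + (4 * b - r) + ((5 * b - r) + (5 * b - 2 * r)) := by
  simp [correction, sum_range_succ]; omega

end SmallCorrections

theorem eq_two_five_of_coprime {b r : ℕ} (hcop : Nat.gcd b r = 1) (h : 5 * b = 2 * r) :
    (b, r) = (2, 5) := by
  obtain ⟨k, rfl⟩ : 2 ∣ b := by omega
  obtain rfl : r = 5 * k := by omega
  rw [Nat.gcd_mul_right] at hcop
  obtain rfl : k = 1 := by simpa using hcop
  rfl

def caseIIIBasket (a d m : ℕ) : Multiset (ℕ × ℕ) :=
  (2 * a + 1, 5 * a + 2) ::ₘ (2 * d + 1, 5 * d + 3) ::ₘ Multiset.replicate m (2, 5)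

section Classification

variable {B : Multiset (ℕ × ℕ)}

theorem caseIII_sums (hB : IsBasket B)
    (h3 : Pm B 1 0 3 = 0) (h4 : Pm B 1 0 4 = 0) (h5 : Pm B 1 0 5 = 1) (h6 : Pm B 1 0 6 = 0) :
    (B.map Prod.fst).sum = 10 ∧ (B.map fun p => 3 * p.1 - p.2).sum = 5 ∧
      (B.map fun p => 4 * p.1 - p.2).sum = 15 ∧
      (B.map fun p => 5 * p.1 - p.2).sum + (B.map fun p => 5 * p.1 - 2 * p.2).sum = 26 := by
  simp only [Pm_eq_correction hB.pos_le] at h3 h4 h5 h6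
  rw [Multiset.map_congr rfl fun p hp => correction_three (hB p hp).2] at h3
  rw [Multiset.map_congr rfl fun p hp => correction_four (hB p hp).2] at h4
  rw [Multiset.map_congr rfl fun p hp => correction_five (hB p hp).2] at h5
  rw [Multiset.map_congr rfl fun p hp => correction_six (hB p hp).2] at h6
  simp only [Multiset.sum_map_add, Multiset.map_const', Multiset.sum_replicate, smul_zero,
    Nat.cast_add] at h3 h4 h5 h6
  generalize (B.map Prod.fst).sum = σ at *
  generalize (B.map fun p => 3 * p.1 - p.2).sum = x at *
  generalize (B.map fun p => 4 * p.1 - p.2).sum = y at *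
  generalize (B.map fun p => 5 * p.1 - p.2).sum = z at *
  generalize (B.map fun p => 5 * p.1 - 2 * p.2).sum = w at *
  norm_num [Nat.choose] at h3 h4 h5 h6
  have : (σ : ℚ) = 10 ∧ (x : ℚ) = 5 ∧ (y : ℚ) = 15 ∧ ((z + w : ℕ) : ℚ) = 26 := by
    push_cast; refine ⟨?_, ?_, ?_, ?_⟩ <;> linarith
  exact_mod_cast this

theorem sum_tsub_five_two_eq_one (hB : IsBasket B) (hσ : (B.map Prod.fst).sum = 10)
    (hx : (B.map fun p => 3 * p.1 - p.2).sum = 5) (hy : (B.map fun p => 4 * p.1 - p.2).sum = 15)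
    (hzw : (B.map fun p => 5 * p.1 - p.2).sum + (B.map fun p => 5 * p.1 - 2 * p.2).sum = 26) :
    (B.map fun p => 5 * p.1 - 2 * p.2).sum = 1 ∧ (B.map fun p => 2 * p.2 - 5 * p.1).sum = 1 := by
  have hr : ∀ p ∈ B, p.2 ≤ 3 * p.1 := by
    -- `(4b - r)₊ ≤ (3b - r)₊ + b`, with equality only when `r ≤ 3b`; the sums force equality
    have hgap := Multiset.sum_map_add_eq_of_forall (B := B) (f := fun p => 4 * p.1 - p.2)
      (g := fun p => 3 * p.1 - p.2 + p.1 - (4 * p.1 - p.2)) (h := fun p => 3 * p.1 - p.2)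
      (k := Prod.fst) fun p _ => by omega
    have hzero := Multiset.sum_eq_zero_iff.mp
      (show (B.map fun p => 3 * p.1 - p.2 + p.1 - (4 * p.1 - p.2)).sum = 0 by omega)
    intro p hp
    have := hzero _ (Multiset.mem_map_of_mem _ hp)
    have := hB p hp
    omega
  have h2σ : (B.map fun p => 2 * p.1).sum = 20 := by norm_num [Multiset.sum_map_mul_left, hσ]
  have h5σ : (B.map fun p => 5 * p.1).sum = 50 := by norm_num [Multiset.sum_map_mul_left, hσ]
  have hz := Multiset.sum_map_add_eq_of_forall (B := B) (f := fun p => 5 * p.1 - p.2)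
    (g := fun _ => 0) (h := fun p => 3 * p.1 - p.2) (k := fun p => 2 * p.1)
    fun p hp => by have := hr p hp; omega
  have h2r : (B.map fun p => 2 * p.2).sum = 50 := by
    have := Multiset.sum_map_add_eq_of_forall (B := B) (f := fun p => 3 * p.1 - p.2)
      (g := Prod.snd) (h := Prod.fst) (k := fun p => 2 * p.1)
      fun p hp => by have := hr p hp; omega
    rw [Multiset.sum_map_mul_left]
    omega
  have hU := Multiset.sum_map_add_eq_of_forall (B := B) (f := fun p => 5 * p.1 - 2 * p.2)
    (g := fun p => 2 * p.2) (h := fun p => 2 * p.2 - 5 * p.1) (k := fun p => 5 * p.1)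
    fun p _ => by omega
  simp only [Multiset.map_const', Multiset.sum_replicate, smul_zero] at hz
  omega

theorem exists_eq_caseIIIBasket (hB : IsBasket B) (hcop : ∀ p ∈ B, Nat.gcd p.1 p.2 = 1)
    (hσ : (B.map Prod.fst).sum = 10) (hW : (B.map fun p => 5 * p.1 - 2 * p.2).sum = 1)
    (hU : (B.map fun p => 2 * p.2 - 5 * p.1).sum = 1) :
    ∃ a d m, a + d + m = 4 ∧ B = caseIIIBasket a d m := by
  obtain ⟨p₀, B₁, rfl, hW₀, hW₁⟩ := Multiset.exists_eq_cons_of_sum_map_eq_one hW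
  rw [Multiset.map_cons, Multiset.sum_cons, show 2 * p₀.2 - 5 * p₀.1 = 0 by omega,
    zero_add] at hU
  obtain ⟨p₁, B₂, rfl, hU₁, hU₂⟩ := Multiset.exists_eq_cons_of_sum_map_eq_one hU
  have hB₂ : B₂ = Multiset.replicate (Multiset.card B₂) (2, 5) := by
    refine Multiset.eq_replicate.mpr ⟨rfl, fun q hq => ?_⟩
    have hWq := hW₁ q (Multiset.mem_cons_of_mem hq)
    have hUq := hU₂ q hq
    exact eq_two_five_of_coprime (hcop q (by simp [hq])) (by omega)
  have hW₁' := hW₁ p₁ (Multiset.mem_cons_self _ _)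
  refine ⟨p₀.1 / 2, p₁.1 / 2, Multiset.card B₂, ?_, ?_⟩
  · rw [hB₂, Multiset.map_cons, Multiset.map_cons, Multiset.map_replicate, Multiset.sum_cons,
      Multiset.sum_cons, Multiset.sum_replicate, smul_eq_mul] at hσ
    omega
  · have e₀ : p₀ = (2 * (p₀.1 / 2) + 1, 5 * (p₀.1 / 2) + 2) := Prod.ext (by omega) (by omega)
    have e₁ : p₁ = (2 * (p₁.1 / 2) + 1, 5 * (p₁.1 / 2) + 3) := Prod.ext (by omega) (by omega)
    rw [caseIIIBasket, ← hB₂, ← e₀, ← e₁]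

end Classification

theorem gcd_two_mul_add_one_five_mul_add_two (a : ℕ) : Nat.gcd (2 * a + 1) (5 * a + 2) = 1 :=
  Nat.isCoprime_iff_coprime.mp ⟨5, -2, by push_cast; ring⟩

theorem gcd_two_mul_add_one_five_mul_add_three (d : ℕ) : Nat.gcd (2 * d + 1) (5 * d + 3) = 1 :=
  Nat.isCoprime_iff_coprime.mp ⟨-5, 2, by push_cast; ring⟩

section CaseIIIBasket

variable {a d m : ℕ}

theorem caseIIIBasket_coprime : ∀ p ∈ caseIIIBasket a d m, Nat.gcd p.1 p.2 = 1 := by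
  intro p hp
  simp only [caseIIIBasket, Multiset.mem_cons] at hp
  rcases hp with rfl | rfl | hp
  · exact gcd_two_mul_add_one_five_mul_add_two a
  · exact gcd_two_mul_add_one_five_mul_add_three d
  · rw [Multiset.eq_of_mem_replicate hp]; rfl

theorem caseIIIBasket_isBasket : IsBasket (caseIIIBasket a d m) := by
  intro p hp
  simp only [caseIIIBasket, Multiset.mem_cons] at hp
  rcases hp with rfl | rfl | hp
  · dsimp only; omega
  · dsimp only; omega
  · rw [Multiset.eq_of_mem_replicate hp]; decide

theorem packStep_caseIIIBasket :
    PackStep (caseIIIBasket a d (m + 1)) (caseIIIBasket (a + 1) d m) := by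
  refine ⟨caseIIIBasket (a + 1) d m, ⟨(2 * a + 1, 5 * a + 2), (2, 5),
    (2 * d + 1, 5 * d + 3) ::ₘ Multiset.replicate m (2, 5), ?_, ?_⟩,
    normalizeBasket_of_coprime caseIIIBasket_coprime⟩
  · rw [caseIIIBasket, Multiset.replicate_succ, Multiset.cons_swap (2, 5)]
  · rfl

theorem dominates_caseIIIBasket (a d m : ℕ) :
    Dominates (caseIIIBasket a d m) (caseIIIBasket (a + m) d 0) := by
  rw [Dominates, normalizeBasket_of_coprime caseIIIBasket_coprime,
    normalizeBasket_of_coprime caseIIIBasket_coprime]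
  induction m generalizing a with
  | zero => rfl
  | succ m ih =>
    rw [← add_assoc, add_right_comm]
    exact .head packStep_caseIIIBasket (ih (a + 1))

theorem caseIIIBasket_dominates (h : a + d + m = 4) :
    Dominates (caseIIIBasket a d m) {(9,22),(1,3)} ∨
      Dominates (caseIIIBasket a d m) {(7,17),(3,8)} ∨
      Dominates (caseIIIBasket a d m) {(5,12),(5,13)} ∨
      Dominates (caseIIIBasket a d m) {(3,7),(7,18)} ∨
      Dominates (caseIIIBasket a d m) {(1,2),(9,23)} := by
  have hdom := dominates_caseIIIBasket a d m
  rw [show a + m = 4 - d by omega] at hdom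
  have hd : d ≤ 4 := by omega
  interval_cases d
  exacts [.inl hdom, .inr (.inl hdom), .inr (.inr (.inl hdom)), .inr (.inr (.inr (.inl hdom))),
    .inr (.inr (.inr (.inr hdom)))]

theorem Kcube_caseIIIBasket (h : a + d + m = 4) :
    Kcube (caseIIIBasket a d m) 1 0 = 1 / (25 * (5 * a + 2)) + 1 / (25 * (5 * d + 3)) := by
  have hm : (m : ℚ) = 4 - a - d := by
    have : ((a + d + m : ℕ) : ℚ) = 4 := by rw [h]; norm_num
    push_cast at this; linarith
  simp only [Kcube, caseIIIBasket, Multiset.map_cons, Multiset.map_replicate, Multiset.sum_cons,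
    Multiset.sum_replicate, nsmul_eq_mul, hm]
  push_cast
  field_simp
  ring

theorem one_div_156_le_Kcube_caseIIIBasket (h : a + d + m = 4) :
    1 / 156 ≤ Kcube (caseIIIBasket a d m) 1 0 := by
  rw [Kcube_caseIIIBasket h]
  have ha : a ≤ 4 := by omega
  have hd : d ≤ 4 - a := by omega
  -- over the reals the bound fails near `a = d = 2`, so integrality is needed
  interval_cases a <;> interval_cases d <;> norm_num

theorem correction_ten_two_five : correction 10 (2, 5) = 73 := by decide

theorem le_correction_ten_left (ha : a ≤ 4) :
    73 * a + 48 ≤ correction 10 (2 * a + 1, 5 * a + 2) := by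
  interval_cases a <;> decide

theorem le_correction_ten_right (hd : d ≤ 4) :
    73 * d + 26 ≤ correction 10 (2 * d + 1, 5 * d + 3) := by
  interval_cases d <;> decide

theorem two_le_Pm_ten_caseIIIBasket (h : a + d + m = 4) :
    2 ≤ Pm (caseIIIBasket a d m) 1 0 10 := by
  have hσ : ((caseIIIBasket a d m).map Prod.fst).sum = 10 := by
    simp only [caseIIIBasket, Multiset.map_cons, Multiset.map_replicate, Multiset.sum_cons,
      Multiset.sum_replicate, smul_eq_mul]
    omega
  have hcorr : 366 ≤ ((caseIIIBasket a d m).map (correction 10)).sum := by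
    simp only [caseIIIBasket, Multiset.map_cons, Multiset.map_replicate, Multiset.sum_cons,
      Multiset.sum_replicate, smul_eq_mul, correction_ten_two_five]
    have := le_correction_ten_left (a := a) (by omega)
    have := le_correction_ten_right (d := d) (by omega)
    omega
  rw [Pm_eq_correction caseIIIBasket_isBasket.pos_le, hσ]
  generalize ((caseIIIBasket a d m).map (correction 10)).sum = s at hcorr ⊢
  have : (366 : ℚ) ≤ s := by exact_mod_cast hcorr
  norm_num [Nat.choose]
  linarith

end CaseIIIBasket

/-- Case `(P₃,P₄,P₅,P₆) = (0,0,1,0)`: `B` dominates one of five baskets;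
consequently `K³ ≥ 1/156` and `P₁₀ ≥ 2`. -/
theorem case_III (B : Multiset (ℕ × ℕ))
    (hadm : Admissible B 0)
    (h3 : Pm B 1 0 3 = 0) (h4 : Pm B 1 0 4 = 0) (h5 : Pm B 1 0 5 = 1)
    (h6 : Pm B 1 0 6 = 0) :
    (Dominates B {(9,22),(1,3)} ∨ Dominates B {(7,17),(3,8)} ∨
      Dominates B {(5,12),(5,13)} ∨ Dominates B {(3,7),(7,18)} ∨
      Dominates B {(1,2),(9,23)}) ∧
    (1 / 156 : ℚ) ≤ Kcube B 1 0 ∧ 2 ≤ Pm B 1 0 10 := by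
  obtain ⟨hB, -, hcop, -⟩ := hadm
  obtain ⟨hσ, hx, hy, hzw⟩ := caseIII_sums hB h3 h4 h5 h6
  obtain ⟨hW, hU⟩ := sum_tsub_five_two_eq_one hB hσ hx hy hzw
  obtain ⟨a, d, m, h, rfl⟩ := exists_eq_caseIIIBasket hB hcop hσ hW hU
  exact ⟨caseIIIBasket_dominates h, one_div_156_le_Kcube_caseIIIBasket h,
    two_le_Pm_ten_caseIIIBasket h⟩
end

section
/- There is no admissible triple (B,1,0) with (P₃,P₄,P₅,P₆)(B,1,0) = (1,0,1,1). -/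
open Finset

def correctionTerm (j : ℕ) (p : ℕ × ℕ) : ℚ :=
  ((j * p.1 % p.2 : ℕ) : ℚ) * ((p.2 : ℚ) - ((j * p.1 % p.2 : ℕ) : ℚ)) / (2 * (p.2 : ℚ))

def correctionSum (B : Multiset (ℕ × ℕ)) (j : ℕ) : ℚ :=
  (B.map (correctionTerm j)).sum

lemma residue_mul_sub_le {x y r : ℕ} (hx : x < r) (hy : y < r) :
    (x : ℚ) * (r - x) ≤ y * (r - y) + ((x + y) % r : ℕ) * (r - ((x + y) % r : ℕ)) := by
  rcases lt_or_ge (x + y) r with hlt | hge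
  · rw [Nat.mod_eq_of_lt hlt]
    have : ((x + y : ℕ) : ℚ) < r := by exact_mod_cast hlt
    push_cast at this ⊢
    nlinarith [(Nat.cast_nonneg y : (0 : ℚ) ≤ y)]
  · have hmod : (x + y) % r = x + y - r := by
      rw [Nat.mod_eq_sub_mod hge, Nat.mod_eq_of_lt (by omega)]
    have hxq : (x : ℚ) < r := by exact_mod_cast hx
    have hyq : (y : ℚ) < r := by exact_mod_cast hy
    rw [hmod, Nat.cast_sub hge]
    have : (r : ℚ) ≤ x + y := by exact_mod_cast hge
    push_cast
    nlinarith

lemma correctionTerm_le_add (i j : ℕ) (p : ℕ × ℕ) :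
    correctionTerm i p ≤ correctionTerm j p + correctionTerm (i + j) p := by
  obtain ⟨b, r⟩ := p
  rcases Nat.eq_zero_or_pos r with rfl | hr
  · simp [correctionTerm]
  have hmod : (i + j) * b % r = (i * b % r + j * b % r) % r := by
    rw [← Nat.add_mod, add_mul]
  simp only [correctionTerm, hmod]
  rw [← add_div]
  gcongr
  exact residue_mul_sub_le (Nat.mod_lt _ hr) (Nat.mod_lt _ hr)

lemma correctionSum_le_add (B : Multiset (ℕ × ℕ)) (i j : ℕ) :
    correctionSum B i ≤ correctionSum B j + correctionSum B (i + j) := by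
  rw [correctionSum, correctionSum, correctionSum, ← Multiset.sum_map_add]
  exact Multiset.sum_map_le_sum_map _ _ fun p _ => correctionTerm_le_add i j p

lemma correctionSum_one {B : Multiset (ℕ × ℕ)} (hB : IsBasket B) :
    correctionSum B 1 =
      (B.map fun p => (p.1 : ℚ) * ((p.2 : ℚ) - (p.1 : ℚ)) / (p.2 : ℚ)).sum / 2 := by
  rw [correctionSum, ← Multiset.sum_map_div]
  refine congrArg Multiset.sum (Multiset.map_congr rfl fun p hp => ?_)
  have hlt : p.1 < p.2 := by have := hB p hp; omega
  rw [correctionTerm, one_mul, Nat.mod_eq_of_lt hlt, div_div, mul_comm (p.2 : ℚ) 2]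

lemma Pm_eq (B : Multiset (ℕ × ℕ)) (χ p₂ : ℤ) (m : ℕ) :
    Pm B χ p₂ m = m * (m - 1) * (2 * m - 1) / 12 * Kcube B χ p₂ + (1 - 2 * m) * χ
      + ∑ j ∈ Icc 1 (m - 1), correctionSum B j := by
  rw [Pm, Multiset.sum_map_sum]
  congr 1
  ring

lemma Pm_two {B : Multiset (ℕ × ℕ)} (hB : IsBasket B) (χ p₂ : ℤ) : Pm B χ p₂ 2 = p₂ := by
  rw [Pm_eq, show Icc 1 (2 - 1) = {1} from rfl, sum_singleton, correctionSum_one hB, Kcube]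
  push_cast
  ring

lemma Pm_add_one (B : Multiset (ℕ × ℕ)) (χ p₂ : ℤ) {m : ℕ} (hm : 1 ≤ m) :
    Pm B χ p₂ (m + 1) = Pm B χ p₂ m + m ^ 2 / 2 * Kcube B χ p₂ - 2 * χ + correctionSum B m := by
  obtain ⟨n, rfl⟩ := Nat.exists_eq_add_of_le' hm
  rw [Pm_eq, Pm_eq, Nat.add_sub_cancel, Nat.add_sub_cancel, sum_Icc_succ_top (by omega)]
  push_cast
  ring

/-- There is no admissible triple `(B,1,0)` with `(P₃,P₄,P₅,P₆) = (1,0,1,1)`. -/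
theorem case_VII :
    ¬ ∃ B : Multiset (ℕ × ℕ), Admissible B 0 ∧
      Pm B 1 0 3 = 1 ∧ Pm B 1 0 4 = 0 ∧ Pm B 1 0 5 = 1 ∧ Pm B 1 0 6 = 1 := by
  rintro ⟨B, ⟨hB, -, -, hK, -⟩, h3, h4, h5, h6⟩
  have h2 := Pm_two hB 1 0
  have e3 := Pm_add_one B 1 0 (m := 2) (by norm_num)
  have e4 := Pm_add_one B 1 0 (m := 3) (by norm_num)
  have e6 := Pm_add_one B 1 0 (m := 5) (by norm_num)
  have hsub := correctionSum_le_add B 2 3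
  norm_num at h2 e3 e4 e6 hsub
  linarith
end

section
/- Let B be a basket such that {2×(2,5), 2×(1,3), 3×(1,4)} ≽ B ≽ {2×(2,5),(1,3),(3,11),(1,4)} and B ≠ {2×(2,5),(1,3),(3,11),(1,4)}. Then B ≽ {2×(2,5),(1,3),(2,7),2×(1,4)}; in particular K³(B,1,0) ≥ 1/210. -/
/-!
Pairs with `b/r ≤ 2/5` stay so under packing (mediants) and under the identification
`(kb, kr) ~ k × (b, r)`. Along such a chain `K³` can only decrease, since `b(r - b)/r` is
superadditive, and the `b`-weight of the pairs of slope exactly `2/5` can only decrease, since the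
mediant of `2/5` with a smaller slope is smaller; both are invariant under the identification.
So every basket between the two given ones keeps both copies of `(2,5)` and has `K³` at least that
of the lower one. Following a chain from the upper basket, a finite check of the one-step
packings of the upper basket, of `{2×(2,5),(1,3),(2,7),2×(1,4)}` and of the lower basket shows
that all other packings break one of these bounds. Hence `B` is the upper basket (`K³ = 1/60`)
or `{2×(2,5),(1,3),(2,7),2×(1,4)}` (`K³ = 1/210`), and the former packs to the latter.
-/

open Relation

def defect (p : ℕ × ℕ) : ℚ := p.1 * (p.2 - p.1) / p.2

theorem Kcube_eq_sub_sum_defect (B : Multiset (ℕ × ℕ)) (χ p₂ : ℤ) :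
    Kcube B χ p₂ = 2 * p₂ + 6 * χ - (B.map defect).sum :=
  rfl

theorem defect_mul_mul (k b r : ℕ) : defect (k * b, k * r) = k • defect (b, r) := by
  rcases eq_or_ne (k : ℚ) 0 with hk | hk
  · simp [defect, hk]
  rcases eq_or_ne (r : ℚ) 0 with hr | hr
  · simp [defect, hr]
  simp only [defect, nsmul_eq_mul, Nat.cast_mul]
  field_simp

theorem defect_add_le {p q : ℕ × ℕ} (hp : 0 < p.2) (hq : 0 < q.2) :
    defect p + defect q ≤ defect (p.1 + q.1, p.2 + q.2) := by
  obtain ⟨b₁, r₁⟩ := p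
  obtain ⟨b₂, r₂⟩ := q
  have hr₁ : (0 : ℚ) < r₁ := by exact_mod_cast hp
  have hr₂ : (0 : ℚ) < r₂ := by exact_mod_cast hq
  simp only [defect, Nat.cast_add]
  rw [div_add_div _ _ hr₁.ne' hr₂.ne', div_le_div_iff₀ (by positivity) (by positivity)]
  -- the two sides differ by `(b₁ r₂ - b₂ r₁)²`
  nlinarith [sq_nonneg ((b₁ : ℚ) * r₂ - b₂ * r₁)]

theorem sum_map_normalizeBasket {M : Type*} [AddCommMonoid M] (f : ℕ × ℕ → M)
    (hf : ∀ k b r : ℕ, f (k * b, k * r) = k • f (b, r)) (B : Multiset (ℕ × ℕ)) :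
    ((normalizeBasket B).map f).sum = (B.map f).sum := by
  rw [normalizeBasket, Multiset.map_bind, Multiset.sum_bind]
  congr 1
  refine Multiset.map_congr rfl fun p _ => ?_
  rw [Multiset.map_replicate, Multiset.sum_replicate, ← hf,
    Nat.mul_div_cancel' (Nat.gcd_dvd_left _ _), Nat.mul_div_cancel' (Nat.gcd_dvd_right _ _)]

theorem Kcube_normalizeBasket (B : Multiset (ℕ × ℕ)) (χ p₂ : ℤ) :
    Kcube (normalizeBasket B) χ p₂ = Kcube B χ p₂ := by
  rw [Kcube_eq_sub_sum_defect, Kcube_eq_sub_sum_defect,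
    sum_map_normalizeBasket defect defect_mul_mul]

def twoFifthsPart (p : ℕ × ℕ) : ℕ := if 5 * p.1 = 2 * p.2 then p.1 else 0

def twoFifthsMass (B : Multiset (ℕ × ℕ)) : ℕ := (B.map twoFifthsPart).sum

theorem twoFifthsPart_mul_mul (k b r : ℕ) :
    twoFifthsPart (k * b, k * r) = k • twoFifthsPart (b, r) := by
  rcases Nat.eq_zero_or_pos k with rfl | hk
  · simp [twoFifthsPart]
  simp only [twoFifthsPart, smul_eq_mul, mul_left_comm _ k, Nat.mul_left_cancel_iff hk]
  split_ifs <;> simp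

theorem twoFifthsPart_add_le {p q : ℕ × ℕ} (hp : 5 * p.1 ≤ 2 * p.2) (hq : 5 * q.1 ≤ 2 * q.2) :
    twoFifthsPart (p.1 + q.1, p.2 + q.2) ≤ twoFifthsPart p + twoFifthsPart q := by
  unfold twoFifthsPart
  split_ifs <;> omega

theorem twoFifthsMass_normalizeBasket (B : Multiset (ℕ × ℕ)) :
    twoFifthsMass (normalizeBasket B) = twoFifthsMass B :=
  sum_map_normalizeBasket twoFifthsPart twoFifthsPart_mul_mul B

def SlopesLeTwoFifths (B : Multiset (ℕ × ℕ)) : Prop := ∀ p ∈ B, 5 * p.1 ≤ 2 * p.2 ∧ 0 < p.2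

namespace SlopesLeTwoFifths

variable {B C : Multiset (ℕ × ℕ)}

theorem normalizeBasket (hB : SlopesLeTwoFifths B) :
    SlopesLeTwoFifths (normalizeBasket B) := by
  intro x hx
  obtain ⟨⟨b, r⟩, hp, hx⟩ := Multiset.mem_bind.1 hx
  obtain ⟨hslope, hr⟩ := hB _ hp
  obtain rfl := Multiset.eq_of_mem_replicate hx
  have hg : 0 < Nat.gcd b r := Nat.gcd_pos_of_pos_right _ hr
  refine ⟨Nat.le_of_mul_le_mul_right ?_ hg, Nat.div_pos (Nat.gcd_le_right _ hr) hg⟩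
  rwa [mul_assoc, mul_assoc, Nat.div_mul_cancel (Nat.gcd_dvd_left b r),
    Nat.div_mul_cancel (Nat.gcd_dvd_right b r)]

theorem packStep (hB : SlopesLeTwoFifths B) (h : PackStep B C) (χ p₂ : ℤ) :
    SlopesLeTwoFifths C ∧ Kcube C χ p₂ ≤ Kcube B χ p₂ ∧ twoFifthsMass C ≤ twoFifthsMass B := by
  obtain ⟨_, ⟨p, q, S, rfl, rfl⟩, rfl⟩ := h
  have hp := hB p (by simp)
  have hq := hB q (by simp)
  refine ⟨normalizeBasket fun x hx => ?_, ?_, ?_⟩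
  · rcases Multiset.mem_cons.1 hx with rfl | hx
    · constructor <;> omega
    · exact hB x (by simp [hx])
  · rw [Kcube_normalizeBasket]
    simp only [Kcube_eq_sub_sum_defect, Multiset.map_cons, Multiset.sum_cons]
    linarith [defect_add_le hp.2 hq.2]
  · rw [twoFifthsMass_normalizeBasket]
    simp only [twoFifthsMass, Multiset.map_cons, Multiset.sum_cons]
    linarith [twoFifthsPart_add_le hp.1 hq.1]

theorem reflTransGen_packStep (hB : SlopesLeTwoFifths B) (h : ReflTransGen PackStep B C)
    (χ p₂ : ℤ) :
    SlopesLeTwoFifths C ∧ Kcube C χ p₂ ≤ Kcube B χ p₂ ∧ twoFifthsMass C ≤ twoFifthsMass B := by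
  induction h with
  | refl => exact ⟨hB, le_rfl, le_rfl⟩
  | tail _ hstep ih =>
    obtain ⟨hslope, hK, hmass⟩ := ih
    obtain ⟨hslope', hK', hmass'⟩ := hslope.packStep hstep χ p₂
    exact ⟨hslope', hK'.trans hK, hmass'.trans hmass⟩

end SlopesLeTwoFifths

def upperBasket : Multiset (ℕ × ℕ) := {(2,5),(2,5),(1,3),(1,3),(1,4),(1,4),(1,4)}

def middleBasket : Multiset (ℕ × ℕ) := {(2,5),(2,5),(1,3),(2,7),(1,4),(1,4)}

def lowerBasket : Multiset (ℕ × ℕ) := {(2,5),(2,5),(1,3),(3,11),(1,4)}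

theorem slopesLeTwoFifths_upperBasket : SlopesLeTwoFifths upperBasket := by
  unfold SlopesLeTwoFifths
  decide

def packings (B : Multiset (ℕ × ℕ)) : Multiset (Multiset (ℕ × ℕ)) :=
  B.bind fun p => (B.erase p).map fun q =>
    normalizeBasket ((p.1 + q.1, p.2 + q.2) ::ₘ (B.erase p).erase q)

theorem mem_packings_of_packStep {B C : Multiset (ℕ × ℕ)} (h : PackStep B C) :
    C ∈ packings B := by
  obtain ⟨_, ⟨p, q, S, rfl, rfl⟩, rfl⟩ := h
  refine Multiset.mem_bind.2 ⟨p, by simp, Multiset.mem_map.2 ⟨q, by simp, ?_⟩⟩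
  simp

theorem packings_upper_middle_lower :
    ∀ M ∈ [upperBasket, middleBasket, lowerBasket], ∀ N ∈ packings M,
      N ∈ [upperBasket, middleBasket, lowerBasket] ∨
        twoFifthsMass N < twoFifthsMass lowerBasket ∨ Kcube N 0 0 < Kcube lowerBasket 0 0 := by
  -- the elaborator's `decide` does not reduce `ℚ` arithmetic; the kernel does
  decide +kernel

theorem mem_of_between_upper_lower {N : Multiset (ℕ × ℕ)}
    (hup : ReflTransGen PackStep upperBasket N) (hlow : ReflTransGen PackStep N lowerBasket) :
    N ∈ [upperBasket, middleBasket, lowerBasket] := by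
  induction hup with
  | refl => simp
  | @tail M N hM hstep ih =>
    have hslope : SlopesLeTwoFifths N :=
      (slopesLeTwoFifths_upperBasket.reflTransGen_packStep (hM.tail hstep) 0 0).1
    obtain ⟨-, hK, hmass⟩ := hslope.reflTransGen_packStep hlow 0 0
    rcases packings_upper_middle_lower M (ih (hlow.head hstep)) N (mem_packings_of_packStep hstep)
      with h | h | h
    · exact h
    · omega
    · linarith

theorem packStep_upperBasket_middleBasket : PackStep upperBasket middleBasket :=
  ⟨_, ⟨(1, 3), (1, 4), {(2,5),(2,5),(1,3),(1,4),(1,4)}, by decide, rfl⟩, by decide⟩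

theorem unpack_B83_general (B : Multiset (ℕ × ℕ))
    (h1 : Dominates
      (Multiset.replicate 2 (2,5) + Multiset.replicate 2 (1,3) +
        Multiset.replicate 3 (1,4)) B)
    (h2 : Dominates B {(2,5),(2,5),(1,3),(3,11),(1,4)})
    (hne : normalizeBasket B ≠ ({(2,5),(2,5),(1,3),(3,11),(1,4)} : Multiset (ℕ × ℕ))) :
    Dominates B {(2,5),(2,5),(1,3),(2,7),(1,4),(1,4)} ∧
    (1 / 210 : ℚ) ≤ Kcube B 1 0 := by
  have hupper : normalizeBasket (Multiset.replicate 2 (2,5) + Multiset.replicate 2 (1,3) +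
      Multiset.replicate 3 (1,4)) = upperBasket := by decide
  have hlower : normalizeBasket {(2,5),(2,5),(1,3),(3,11),(1,4)} = lowerBasket := by decide
  have hmiddle : normalizeBasket {(2,5),(2,5),(1,3),(2,7),(1,4),(1,4)} = middleBasket := by
    decide
  rw [Dominates, hupper] at h1
  rw [Dominates, hlower] at h2
  have hB : normalizeBasket B = upperBasket ∨ normalizeBasket B = middleBasket := by
    simpa [show normalizeBasket B ≠ lowerBasket from hne] using mem_of_between_upper_lower h1 h2
  rw [Dominates, hmiddle, ← Kcube_normalizeBasket]
  rcases hB with hB | hB <;> rw [hB]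
  · exact ⟨.single packStep_upperBasket_middleBasket, by norm_num [Kcube, upperBasket]⟩
  · exact ⟨.refl, by norm_num [Kcube, middleBasket]⟩

/-- If `{2×(2,5), 2×(1,3), 3×(1,4)} ≽ B ≽ {2×(2,5),(1,3),(3,11),(1,4)}` and
`B ≠ {2×(2,5),(1,3),(3,11),(1,4)}` (up to the identification), then
`B ≽ {2×(2,5),(1,3),(2,7),2×(1,4)}`; in particular `K³(B,1,0) ≥ 1/210`. -/
theorem unpack_B83 (B : Multiset (ℕ × ℕ)) (hB : IsBasket B)
    (h1 : Dominates
      (Multiset.replicate 2 (2,5) + Multiset.replicate 2 (1,3) +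
        Multiset.replicate 3 (1,4)) B)
    (h2 : Dominates B {(2,5),(2,5),(1,3),(3,11),(1,4)})
    (hne : normalizeBasket B ≠ ({(2,5),(2,5),(1,3),(3,11),(1,4)} : Multiset (ℕ × ℕ))) :
    Dominates B {(2,5),(2,5),(1,3),(2,7),(1,4),(1,4)} ∧
    (1 / 210 : ℚ) ≤ Kcube B 1 0 :=
  unpack_B83_general B h1 h2 hne
end
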